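/- arXiv:1801.08490 — 3 statements merged into one kernel-verified Lean document; each statement's English description precedes it below -/
import Mathlib

section
/- Let Λ₁, Λ₂ ⊆ ℝ^d with Λ₁ relatively dense (there is R < ∞ such that every ball of radius R meets Λ₁), and suppose the difference set Λ₁ − Λ₂ = {x − y : x ∈ Λ₁, y ∈ Λ₂} is discrete (has no finite limit points). Then Λ₂ is uniformly discrete: inf{|λ − λ'| : λ, λ' ∈ Λ₂, λ ≠ λ'} > 0. -/
/-! A relatively dense `Λ₁` lets every `x ∈ Λ₂` be paired with some `a ∈ Λ₁` at distance at most
`R`. If `x, y ∈ Λ₂` are closer than `1`, then `a - x` and `a - y` are two points of `Λ₁ - Λ₂` in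
the ball of radius `R + 1` at distance `dist x y` from each other. A set without accumulation
points meets a compact ball in a finite set, whose minimal separation bounds `dist x y` from below. -/

open Filter

open scoped Pointwise

theorem IsCompact.finite_inter_of_forall_not_accPt {X : Type*} [TopologicalSpace X]
    {S K : Set X} (hK : IsCompact K) (hS : ∀ x ∈ K, ¬AccPt x (𝓟 S)) : (S ∩ K).Finite := by
  by_contra hinf
  obtain ⟨x, hxK, hx⟩ := Set.Infinite.exists_accPt_of_subset_isCompact hinf hK
    Set.inter_subset_right
  exact hS x hxK (hx.mono (principal_mono.2 Set.inter_subset_left))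

theorem Set.Finite.exists_pos_forall_le_dist {α : Type*} [MetricSpace α] {s : Set α}
    (hs : s.Finite) : ∃ η > (0 : ℝ), ∀ x ∈ s, ∀ y ∈ s, x ≠ y → η ≤ dist x y := by
  obtain ⟨C, hC, hsep⟩ := hs.relatively_discrete
  refine ⟨(min C 1).toReal, ENNReal.toReal_pos (by positivity) (by simp), ?_⟩
  intro x hx y hy hxy
  rw [dist_edist]
  exact ENNReal.toReal_mono (edist_ne_top x y) (min_le_left _ _ |>.trans (hsep x hx y hy hxy))

theorem exists_pos_forall_le_dist_of_forall_not_accPt_sub {E : Type*} [NormedAddCommGroup E]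
    [ProperSpace E] {Λ₁ Λ₂ : Set E} (hrd : ∃ R, ∀ x : E, ∃ a ∈ Λ₁, dist x a ≤ R)
    (hdisc : ∀ z : E, ¬AccPt z (𝓟 (Λ₁ - Λ₂))) :
    ∃ η > (0 : ℝ), ∀ x ∈ Λ₂, ∀ y ∈ Λ₂, x ≠ y → η ≤ dist x y := by
  obtain ⟨R, hR⟩ := hrd
  obtain ⟨η, hη, hsep⟩ := ((isCompact_closedBall (0 : E) (R + 1)).finite_inter_of_forall_not_accPt
    fun z _ ↦ hdisc z).exists_pos_forall_le_dist
  refine ⟨min η 1, by positivity, fun x hx y hy hxy ↦ ?_⟩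
  by_contra! hclose
  obtain ⟨a, ha, hxa⟩ := hR x
  have hax : ‖a - x‖ ≤ R := by rwa [← dist_eq_norm, dist_comm]
  have hay : ‖a - y‖ ≤ R + 1 := calc
    ‖a - y‖ ≤ ‖a - x‖ + ‖x - y‖ := norm_sub_le_norm_sub_add_norm_sub a x y
    _ ≤ R + 1 := by rw [← dist_eq_norm x y]; linarith [min_le_right η 1]
  have hsep_xy := hsep (a - x) ⟨Set.sub_mem_sub ha hx, by simpa using hax.trans (by linarith)⟩
    (a - y) ⟨Set.sub_mem_sub ha hy, by simpa using hay⟩ (by simpa using hxy)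
  rw [dist_sub_left] at hsep_xy
  linarith [min_le_left η 1]

/-- If `Λ₁` is relatively dense and the difference set `Λ₁ − Λ₂` is discrete
(has no finite limit points), then `Λ₂` is uniformly discrete. -/
theorem stmt_2 (d : ℕ) (Λ₁ Λ₂ : Set (EuclideanSpace ℝ (Fin d)))
    (hrd : ∃ R > (0 : ℝ), ∀ x : EuclideanSpace ℝ (Fin d), ∃ y ∈ Λ₁, dist x y ≤ R)
    (hdisc : ∀ x : EuclideanSpace ℝ (Fin d),
      ¬ AccPt x (Filter.principal {z | ∃ a ∈ Λ₁, ∃ b ∈ Λ₂, z = a - b})) :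
    ∃ η > (0 : ℝ), ∀ x ∈ Λ₂, ∀ y ∈ Λ₂, x ≠ y → η ≤ dist x y := by
  obtain ⟨R, -, hR⟩ := hrd
  have hsub : {z | ∃ a ∈ Λ₁, ∃ b ∈ Λ₂, z = a - b} = Λ₁ - Λ₂ := by
    ext z
    simp [Set.mem_sub, eq_comm]
  exact exists_pos_forall_le_dist_of_forall_not_accPt_sub ⟨R, hR⟩ (hsub ▸ hdisc)
end

section
/- Let Λ ⊆ ℝ^d be a relatively dense set such that Λ − Λ is discrete. Then Λ is uniformly discrete. -/
open Metric Filter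

open scoped Pointwise

theorem exists_pos_le_dist_of_not_accPt_zero_sub {E : Type*} [SeminormedAddCommGroup E] {Λ : Set E}
    (h : ¬ AccPt 0 (𝓟 (Λ - Λ))) :
    ∃ η > (0 : ℝ), ∀ x ∈ Λ, ∀ y ∈ Λ, x ≠ y → η ≤ dist x y := by
  rw [accPt_iff_nhds] at h
  push Not at h
  obtain ⟨U, hU, hU0⟩ := h
  obtain ⟨η, hη, hball⟩ := Metric.mem_nhds_iff.mp hU
  refine ⟨η, hη, fun x hx y hy hxy => ?_⟩
  by_contra! hlt
  have hclose : x - y ∈ ball (0 : E) η := by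
    rwa [mem_ball_zero_iff, ← dist_eq_norm]
  exact hxy (sub_eq_zero.mp (hU0 _ ⟨hball hclose, Set.sub_mem_sub hx hy⟩))

theorem stmt_3_general (d : ℕ) (Λ : Set (EuclideanSpace ℝ (Fin d)))
    (hdisc : ∀ x : EuclideanSpace ℝ (Fin d),
      ¬ AccPt x (Filter.principal {z | ∃ a ∈ Λ, ∃ b ∈ Λ, z = a - b})) :
    ∃ η > (0 : ℝ), ∀ x ∈ Λ, ∀ y ∈ Λ, x ≠ y → η ≤ dist x y := by
  have hsub : {z | ∃ a ∈ Λ, ∃ b ∈ Λ, z = a - b} = Λ - Λ := by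
    ext z
    simp only [Set.mem_ofPred_eq, Set.mem_sub, eq_comm]
  exact exists_pos_le_dist_of_not_accPt_zero_sub (hsub ▸ hdisc 0)

/-- A relatively dense set `Λ ⊆ ℝ^d` with `Λ − Λ` discrete is uniformly discrete. -/
theorem stmt_3 (d : ℕ) (Λ : Set (EuclideanSpace ℝ (Fin d)))
    (hrd : ∃ R > (0 : ℝ), ∀ x : EuclideanSpace ℝ (Fin d), ∃ y ∈ Λ, dist x y ≤ R)
    (hdisc : ∀ x : EuclideanSpace ℝ (Fin d),
      ¬ AccPt x (Filter.principal {z | ∃ a ∈ Λ, ∃ b ∈ Λ, z = a - b})) :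
    ∃ η > (0 : ℝ), ∀ x ∈ Λ, ∀ y ∈ Λ, x ≠ y → η ≤ dist x y :=
  stmt_3_general d Λ hdisc
end

section
/- Let f be a tempered distribution on ℝ^d satisfying |f(φ)| ≤ c N_{n,m}(φ) for all Schwartz φ, where N_{n,m}(φ) = sup_x max{1,|x|^n} max_{||k||≤m} |D^k φ(x)|, and suppose f = Σ_{λ∈Λ} P_λ(D) δ_λ with Λ discrete. Then deg P_λ ≤ m for every λ ∈ Λ. -/
/-!
Test `P(D)δ_λ` against `φ_ε(x) = ψ((x - λ)/ε)`, where `ψ(y) = y^k/k!` near `0` (cut off by a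
bump function), so that `ψ^{(j)}(0) = δ_{jk}` and `f(φ_ε) = p_k ε^{-k}`. A derivative of order
`j ≤ m` of `φ_ε` carries a factor `ε^{-j} ≤ ε^{-m}`, and for `ε ≤ 1` the weight satisfies
`max{1, |x|^n} ≤ (1 + |λ|)^n (1 + |y|)^n` with `y = (x - λ)/ε`, which the decay of `ψ` absorbs;
so `N_{n,m}(φ_ε) = O(ε^{-m})`. Hence `|p_k| = O(ε^{k-m})`, which forces `p_k = 0` when `k > m`.
-/

open Finset
open scoped SchwartzMap

noncomputable section

section

variable {F : Type*} [NormedAddCommGroup F] [NormedSpace ℝ F]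

namespace SchwartzMap

def rescale (ψ : 𝓢(ℝ, F)) (a : ℝ) {ε : ℝ} (hε : 0 < ε) : 𝓢(ℝ, F) :=
  compCLMOfAntilipschitz ℝ (g := fun x => ε⁻¹ * (x - a)) (K := ε.toNNReal) (by fun_prop)
    (AntilipschitzWith.of_le_mul_dist fun x y => by
      rw [Real.coe_toNNReal _ hε.le, Real.dist_eq, Real.dist_eq, ← mul_sub, abs_mul, abs_inv,
        abs_of_pos hε, mul_inv_cancel_left₀ hε.ne', sub_sub_sub_cancel_right]) ψ

lemma iteratedDeriv_rescale (ψ : 𝓢(ℝ, F)) (a : ℝ) {ε : ℝ} (hε : 0 < ε) (j : ℕ) (x : ℝ) :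
    iteratedDeriv j (ψ.rescale a hε) x = ε⁻¹ ^ j • iteratedDeriv j ψ (ε⁻¹ * (x - a)) := by
  rw [← congrFun (iteratedDeriv_comp_const_smul (ψ.smooth j) ε⁻¹)]
  exact congrFun (iteratedDeriv_comp_sub_const j (fun w => ψ (ε⁻¹ * w)) a) x

lemma one_add_abs_pow_mul_norm_iteratedDeriv_le (ψ : 𝓢(ℝ, F)) {n m j : ℕ} (hj : j ≤ m)
    (y : ℝ) :
    (1 + |y|) ^ n * ‖iteratedDeriv j ψ y‖ ≤
      2 ^ n * (Iic (n, m)).sup (fun q => SchwartzMap.seminorm ℝ q.1 q.2) ψ := by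
  rw [← norm_iteratedFDeriv_eq_norm_iteratedDeriv, ← Real.norm_eq_abs]
  exact one_add_le_sup_seminorm_apply (m := (n, m)) le_rfl hj ψ y

end SchwartzMap

/-- The seminorm `N_{n,m}` of the statement. -/
def weightedSupNorm (n m : ℕ) (φ : ℝ → F) : ℝ :=
  ⨆ x : ℝ, (max 1 (|x| ^ n) *
    (Finset.range (m + 1)).sup' (by simp) (fun k => ‖iteratedDeriv k φ x‖))

lemma weightedSupNorm_nonneg (n m : ℕ) (φ : ℝ → F) : 0 ≤ weightedSupNorm n m φ :=
  Real.iSup_nonneg fun x => mul_nonneg (zero_le_one.trans (le_max_left _ _))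
    ((norm_nonneg _).trans (le_sup' (fun k => ‖iteratedDeriv k φ x‖) (mem_range.mpr m.succ_pos)))

lemma max_one_abs_pow_le {ε : ℝ} (hε : 0 < ε) (hε1 : ε ≤ 1) (a x : ℝ) (n : ℕ) :
    max 1 (|x| ^ n) ≤ (1 + |a|) ^ n * (1 + |ε⁻¹ * (x - a)|) ^ n := by
  have hscale : |x - a| ≤ |ε⁻¹ * (x - a)| := by
    rw [abs_mul, abs_of_pos (inv_pos.mpr hε)]
    exact le_mul_of_one_le_left (abs_nonneg _) ((one_le_inv₀ hε).mpr hε1)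
  have hx : 1 + |x| ≤ (1 + |a|) * (1 + |ε⁻¹ * (x - a)|) := by
    have := abs_sub_abs_le_abs_sub x a
    nlinarith [abs_nonneg a, abs_nonneg (ε⁻¹ * (x - a))]
  rw [← mul_pow]
  exact max_le (one_le_pow₀ (by linarith [abs_nonneg x]))
    (pow_le_pow_left₀ (abs_nonneg x) (by linarith) n)

lemma SchwartzMap.exists_weightedSupNorm_rescale_le (ψ : 𝓢(ℝ, F)) (a : ℝ) (n m : ℕ) :
    ∃ C, ∀ ε (hε : 0 < ε), ε ≤ 1 → weightedSupNorm n m (ψ.rescale a hε) ≤ C * ε⁻¹ ^ m := by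
  set S := 2 ^ n * (Iic (n, m)).sup (fun q => SchwartzMap.seminorm ℝ q.1 q.2) ψ
  have hS : 0 ≤ S := mul_nonneg (by positivity) (apply_nonneg _ _)
  refine ⟨(1 + |a|) ^ n * S, fun ε hε hε1 => ?_⟩
  refine Real.iSup_le (fun x => ?_) (mul_nonneg (mul_nonneg (by positivity) hS) (by positivity))
  obtain ⟨j, hj, hsup⟩ := exists_mem_eq_sup' (s := range (m + 1)) (by simp)
    (fun k => ‖iteratedDeriv k (ψ.rescale a hε) x‖)
  have hjm : j ≤ m := Nat.lt_succ_iff.mp (mem_range.mp hj)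
  rw [hsup, ψ.iteratedDeriv_rescale, norm_smul, norm_pow, norm_inv, Real.norm_of_nonneg hε.le]
  set y := ε⁻¹ * (x - a)
  calc max 1 (|x| ^ n) * (ε⁻¹ ^ j * ‖iteratedDeriv j ψ y‖)
      ≤ ((1 + |a|) ^ n * (1 + |y|) ^ n) * (ε⁻¹ ^ m * ‖iteratedDeriv j ψ y‖) := by
        gcongr
        · exact max_one_abs_pow_le hε hε1 a x n
        · exact (one_le_inv₀ hε).mpr hε1
    _ = ε⁻¹ ^ m * (1 + |a|) ^ n * ((1 + |y|) ^ n * ‖iteratedDeriv j ψ y‖) := by ring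
    _ ≤ ε⁻¹ ^ m * (1 + |a|) ^ n * S := by
        gcongr
        exact ψ.one_add_abs_pow_mul_norm_iteratedDeriv_le hjm y
    _ = (1 + |a|) ^ n * S * ε⁻¹ ^ m := by ring

end

lemma iteratedDeriv_ofReal_comp {f : ℝ → ℝ} {j : ℕ} (hf : ContDiff ℝ j f) (x : ℝ) :
    iteratedDeriv j (fun y => (f y : ℂ)) x = iteratedDeriv j f x := by
  rw [iteratedDeriv_eq_iteratedFDeriv, iteratedDeriv_eq_iteratedFDeriv]
  exact congrArg (· fun _ => 1) (Complex.ofRealCLM.iteratedFDeriv_comp_left hf.contDiffAt le_rfl)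

def unitBump : ContDiffBump (0 : ℝ) := ⟨1, 2, one_pos, one_lt_two⟩

def monomialBump (k : ℕ) : 𝓢(ℝ, ℂ) :=
  HasCompactSupport.toSchwartzMap (f := fun y => ((y ^ k / k.factorial * unitBump y : ℝ) : ℂ))
    ((unitBump.hasCompactSupport.mul_left).comp_left Complex.ofReal_zero)
    (Complex.ofRealCLM.contDiff.comp ((contDiff_id.pow k).div_const _ |>.mul unitBump.contDiff))

lemma iteratedDeriv_monomialBump_zero (k j : ℕ) :
    iteratedDeriv j (monomialBump k) 0 = if j = k then 1 else 0 := by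
  have hloc : ⇑(monomialBump k) =ᶠ[nhds 0] fun y => ((y ^ k / k.factorial : ℝ) : ℂ) := by
    filter_upwards [Metric.closedBall_mem_nhds (0 : ℝ) one_pos] with y hy
    simp [monomialBump, unitBump.one_of_mem_closedBall hy]
  rw [hloc.iteratedDeriv_eq, iteratedDeriv_ofReal_comp (f := fun y => y ^ k / k.factorial)
    (by fun_prop), iteratedDeriv_div_const, iteratedDeriv_fun_pow_zero]
  split_ifs with h
  · subst h; simp [Nat.factorial_ne_zero]
  · simp

lemma iteratedDeriv_rescale_monomialBump_self (k j : ℕ) (a : ℝ) {ε : ℝ} (hε : 0 < ε) :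
    iteratedDeriv j ((monomialBump k).rescale a hε) a = if j = k then (ε⁻¹ ^ k : ℂ) else 0 := by
  rw [SchwartzMap.iteratedDeriv_rescale, sub_self, mul_zero, iteratedDeriv_monomialBump_zero]
  split_ifs with h
  · subst h; simp
  · simp

lemma nonpos_of_forall_mul_inv_pow_le {a C : ℝ} {k m : ℕ} (hmk : m < k)
    (h : ∀ ε, 0 < ε → ε ≤ 1 → a * ε⁻¹ ^ k ≤ C * ε⁻¹ ^ m) : a ≤ 0 := by
  have hlim : Filter.Tendsto (fun ε : ℝ => C * ε ^ (k - m)) (nhdsWithin 0 (Set.Ioi 0))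
      (nhds 0) := by
    have hcont : Continuous fun ε : ℝ => C * ε ^ (k - m) := by fun_prop
    simpa [zero_pow (Nat.sub_ne_zero_of_lt hmk)] using
      (hcont.tendsto 0).mono_left nhdsWithin_le_nhds
  refine ge_of_tendsto hlim ?_
  filter_upwards [Ioo_mem_nhdsGT one_pos] with ε ⟨hε, hε1⟩
  have hsplit : ε ^ k = ε ^ (k - m) * ε ^ m := by rw [← pow_add, Nat.sub_add_cancel hmk.le]
  calc a = a * ε⁻¹ ^ k * ε ^ k := by
        rw [mul_assoc, ← mul_pow, inv_mul_cancel₀ hε.ne', one_pow, mul_one]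
    _ ≤ C * ε⁻¹ ^ m * ε ^ k := mul_le_mul_of_nonneg_right (h ε hε hε1.le) (by positivity)
    _ = C * ε ^ (k - m) := by
        rw [hsplit, mul_comm (ε ^ (k - m)), ← mul_assoc, mul_assoc C, ← mul_pow,
          inv_mul_cancel₀ hε.ne', one_pow, mul_one]

end

/-- (One-dimensional version, fixed `λ`.) If the distribution `f = P(D)δ_λ`,
`f(φ) = Σ_{k≤K} p_k · φ^{(k)}(λ)`, satisfies `|f(φ)| ≤ c·N_{n,m}(φ)` for all Schwartz `φ`,
where `N_{n,m}(φ) = sup_x max{1,|x|^n} max_{k≤m} |φ^{(k)}(x)|`, then `p_k = 0` for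
all `k > m`, i.e. `deg P ≤ m`. -/
theorem stmt_16 (n m K : ℕ) (c : ℝ) (lam : ℝ) (p : ℕ → ℂ)
    (hf : ∀ φ : SchwartzMap ℝ ℂ,
      ‖∑ k ∈ Finset.range (K + 1), p k * iteratedDeriv k (⇑φ) lam‖
        ≤ c * ⨆ x : ℝ, (max 1 (|x| ^ n) *
            (Finset.range (m + 1)).sup' (by simp) (fun k => ‖iteratedDeriv k (⇑φ) x‖))) :
    ∀ k, m < k → k ≤ K → p k = 0 := by
  intro k hmk hkK
  obtain ⟨C, hC⟩ := (monomialBump k).exists_weightedSupNorm_rescale_le lam n m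
  refine norm_le_zero_iff.mp (nonpos_of_forall_mul_inv_pow_le (C := |c| * C) hmk
    fun ε hε hε1 => ?_)
  set φ := (monomialBump k).rescale lam hε
  have hφ : ‖p k‖ * ε⁻¹ ^ k ≤ c * weightedSupNorm n m φ := by
    have h := hf φ
    simp only [φ, iteratedDeriv_rescale_monomialBump_self, mul_ite, mul_zero, sum_ite_eq',
      mem_range.mpr (Nat.lt_succ_of_le hkK), if_true, norm_mul, norm_pow, norm_inv,
      Complex.norm_real, Real.norm_of_nonneg hε.le] at h
    exact h
  calc ‖p k‖ * ε⁻¹ ^ k ≤ c * weightedSupNorm n m φ := hφ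
    _ ≤ |c| * weightedSupNorm n m φ :=
        mul_le_mul_of_nonneg_right (le_abs_self c) (weightedSupNorm_nonneg n m φ)
    _ ≤ |c| * C * ε⁻¹ ^ m := by
        rw [mul_assoc]
        exact mul_le_mul_of_nonneg_left (hC ε hε hε1) (abs_nonneg c)
end
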